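/- For a rooted weighted tree with metric d, the map φ ↦ u_φ, where u_φ(y) = Σ_{x₀ ≠ x ⪯ y} d(x,x⁺)φ(x), is a linear isometric isomorphism from ℓ∞(X∖{x₀}) onto Lip⁺(d) (Lipschitz functions vanishing at x₀ with the best-Lipschitz-constant norm), with inverse (Δu)(x) = (u(x) − u(x⁺))/d(x,x⁺). -/

import Mathlib

/-- Length of a path (list of vertices) in a weighted graph. -/
noncomputable def pathLen {X : Type*} (w : X → X → ℝ) : List X → ℝ
  | [] => 0
  | [_] => 0
  | a :: b :: l => w a b + pathLen w (b :: l)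

/-- `l` is a walk from `x` to `y` along edges of the weighted graph `w`. -/
def IsWalk {X : Type*} (w : X → X → ℝ) (x y : X) (l : List X) : Prop :=
  l.head? = some x ∧ l.getLast? = some y ∧ l.Chain' (fun a b => 0 < w a b)

/-- The shortest-path distance induced by the weighted graph `w`. -/
noncomputable def gdist {X : Type*} (w : X → X → ℝ) (x y : X) : ℝ :=
  sInf {r | ∃ l, IsWalk w x y l ∧ r = pathLen w l}

/-- A finite rooted weighted tree, encoded by a parent map: every vertex reaches
the root by iterating `parent`, and `wt x` is the weight of the edge `{x, parent x}`. -/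
structure WRootedTree (X : Type*) where
  root : X
  parent : X → X
  wt : X → ℝ
  parent_root : parent root = root
  reach : ∀ x, ∃ n, parent^[n] x = root
  wt_pos : ∀ x, x ≠ root → 0 < wt x

/-- The weight function of the graph underlying a rooted tree. -/
noncomputable def treeW {X : Type*} [DecidableEq X] (T : WRootedTree X) : X → X → ℝ :=
  fun a b =>
    if a ≠ b ∧ T.parent a = b then T.wt a
    else if a ≠ b ∧ T.parent b = a then T.wt b
    else 0

/-- The tree metric: the shortest-path distance of the underlying weighted graph. -/
noncomputable def tdist {X : Type*} [DecidableEq X] (T : WRootedTree X) : X → X → ℝ :=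
  gdist (treeW T)

/-- `x ⪯ y` in the tree order: `x` lies on the path from the root to `y`. -/
def treeLE {X : Type*} (T : WRootedTree X) (x y : X) : Prop :=
  ∃ n, T.parent^[n] y = x

/-- Cumulative function `Ξ(x) = ∑_{y ⪰ x} ξ(y)`, the sum of `ξ` over descendants of `x`. -/
noncomputable def cumul {X : Type*} [Fintype X] (T : WRootedTree X) (ξ : X → ℝ) (x : X) : ℝ :=
  ∑ y, Set.indicator {y | treeLE T x y} ξ y

/-- The Kantorovich potential $u_φ(y) = ∑_{x₀ ≠ x ⪯ y} d(x,x⁺) φ(x)$. -/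
noncomputable def treePsi {X : Type*} [Fintype X] [DecidableEq X] (T : WRootedTree X)
    (φ : X → ℝ) (y : X) : ℝ :=
  ∑ x, Set.indicator {x | x ≠ T.root ∧ treeLE T x y}
    (fun x => tdist T x (T.parent x) * φ x) x

/-- The discrete gradient $(Δu)(x) = (u(x) - u(x⁺)) / d(x,x⁺)$, set to 0 at the root. -/
noncomputable def treeDelta {X : Type*} [Fintype X] [DecidableEq X] (T : WRootedTree X)
    (u : X → ℝ) (x : X) : ℝ :=
  if x = T.root then 0 else (u x - u (T.parent x)) / tdist T x (T.parent x)

section Aux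
variable {X : Type*}

namespace WRootedTree

variable (T : WRootedTree X)

lemma iterate_root : ∀ n, T.parent^[n] T.root = T.root := by
  intro n; induction n with
  | zero => rfl
  | succ n ih => rw [Function.iterate_succ_apply, T.parent_root, ih]

variable {T}

lemma parent_ne {x : X} (hx : x ≠ T.root) : T.parent x ≠ x := by
  intro h
  obtain ⟨n, hn⟩ := T.reach x
  apply hx
  have hfix : ∀ m, T.parent^[m] x = x := by
    intro m; induction m with
    | zero => rfl
    | succ m ih => rw [Function.iterate_succ_apply, h, ih]
  rw [hfix n] at hn; exact hn

lemma iterate_fix {x : X} {n : ℕ} (h : T.parent^[n] x = x) : ∀ k, T.parent^[k * n] x = x := by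
  intro k; induction k with
  | zero => simp
  | succ k ih => rw [Nat.succ_mul, Function.iterate_add_apply, h, ih]

lemma not_treeLE_parent {x : X} (hx : x ≠ T.root) : ¬ treeLE T x (T.parent x) := by
  rintro ⟨n, hn⟩
  have hcyc : T.parent^[n + 1] x = x := by
    rw [Function.iterate_succ_apply, hn]
  obtain ⟨m, hm⟩ := T.reach x
  apply hx
  have h1 : T.parent^[(m + 1) * (n + 1)] x = x := iterate_fix hcyc (m + 1)
  have h2 : m ≤ (m + 1) * (n + 1) := by nlinarith
  obtain ⟨a, ha⟩ := Nat.exists_eq_add_of_le h2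
  rw [ha, add_comm, Function.iterate_add_apply, hm, iterate_root] at h1
  exact h1.symm

lemma treeLE_refl (x : X) : treeLE T x x := ⟨0, rfl⟩

lemma treeLE_step {z x : X} : treeLE T z x ↔ z = x ∨ treeLE T z (T.parent x) := by
  constructor
  · rintro ⟨n, hn⟩
    cases n with
    | zero => exact Or.inl hn.symm
    | succ n => exact Or.inr ⟨n, by rwa [Function.iterate_succ_apply] at hn⟩
  · rintro (rfl | ⟨n, hn⟩)
    · exact treeLE_refl z
    · exact ⟨n + 1, by rwa [Function.iterate_succ_apply]⟩

lemma treeLE_root_iff {z : X} : treeLE T z T.root ↔ z = T.root := by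
  constructor
  · rintro ⟨n, hn⟩; rw [← hn, iterate_root]
  · rintro rfl; exact treeLE_refl _

end WRootedTree

open WRootedTree

variable {T : WRootedTree X}

section Graph
variable {w : X → X → ℝ}

lemma pathLen_nonneg : ∀ {l : List X}, l.Chain' (fun a b => 0 < w a b) → 0 ≤ pathLen w l
  | [], _ => le_refl _
  | [_], _ => le_refl _
  | a :: b :: l, h => by
      unfold List.Chain' at h
      rw [List.isChain_cons_cons] at h
      have := pathLen_nonneg h.2
      simp only [pathLen]
      linarith [h.1]

/-- walks compose -/
lemma IsWalk.comp {x z y : X} {l₁ l₂ : List X} (h₁ : IsWalk w x z l₁) (h₂ : IsWalk w z y l₂) :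
    ∃ l, IsWalk w x y l := by
  obtain ⟨hh₁, hl₁, hc₁⟩ := h₁
  obtain ⟨hh₂, hl₂, hc₂⟩ := h₂
  match l₂ with
  | [] => simp at hh₂
  | [a] =>
      simp at hh₂ hl₂
      exact ⟨l₁, hh₁, by rw [hl₁, ← hh₂, hl₂], hc₁⟩
  | a :: b :: t =>
      simp only [List.getLast?_cons_cons] at hl₂
      refine ⟨l₁ ++ (b :: t), ?_, ?_, ?_⟩
      · rcases l₁ with _ | ⟨c, l₁⟩
        · simp at hh₁
        · simpa using hh₁
      · rw [List.getLast?_append, hl₂]; rfl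
      · refine hc₁.append (List.isChain_cons_cons.mp hc₂).2 ?_
        intro p hp q hq
        simp only [List.head?_cons, Option.mem_def, Option.some.injEq] at hq
        simp only [hl₁, Option.mem_def, Option.some.injEq] at hp
        have haz : a = z := by simpa using hh₂
        subst hp hq haz
        exact (List.isChain_cons_cons.mp hc₂).1

lemma IsWalk.reverse {x y : X} {l : List X} (hsym : ∀ a b, 0 < w a b → 0 < w b a)
    (h : IsWalk w x y l) : IsWalk w y x l.reverse := by
  obtain ⟨hh, hl, hc⟩ := h
  refine ⟨by rwa [List.head?_reverse], by rwa [List.getLast?_reverse], ?_⟩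
  unfold List.Chain' at hc ⊢
  rw [List.isChain_reverse]
  exact hc.imp (fun a b hab => hsym a b hab)

lemma walk_bound {v : X → ℝ} {K : ℝ}
    (hedge : ∀ a b, 0 < w a b → |v a - v b| ≤ K * w a b) :
    ∀ {l : List X} {x y : X}, IsWalk w x y l → |v x - v y| ≤ K * pathLen w l := by
  intro l
  induction l with
  | nil => rintro x y ⟨h, -, -⟩; simp at h
  | cons a l ih =>
      rintro x y ⟨hh, hl, hc⟩
      simp only [List.head?_cons, Option.some.injEq] at hh
      subst hh
      rcases l with _ | ⟨b, t⟩
      · simp only [List.getLast?_singleton, Option.some.injEq] at hl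
        subst hl
        simp [pathLen]
      · unfold List.Chain' at hc
        rw [List.isChain_cons_cons] at hc
        have hwalk : IsWalk w b y (b :: t) := ⟨rfl, by simpa using hl, hc.2⟩
        have h1 := hedge _ _ hc.1
        have h2 := ih hwalk
        calc |v a - v y| ≤ |v a - v b| + |v b - v y| := abs_sub_le _ _ _
          _ ≤ K * w a b + K * pathLen w (b :: t) := add_le_add h1 h2
          _ = K * pathLen w (a :: b :: t) := by rw [pathLen]; ring

lemma gdist_le_pathLen {x y : X} {l : List X} (h : IsWalk w x y l) :
    gdist w x y ≤ pathLen w l := by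
  apply csInf_le
  · refine ⟨0, ?_⟩
    rintro r ⟨l', hl', rfl⟩
    exact pathLen_nonneg hl'.2.2
  · exact ⟨l, h, rfl⟩

lemma abs_le_mul_gdist {v : X → ℝ} {K : ℝ} (hK : 0 ≤ K)
    (hedge : ∀ a b, 0 < w a b → |v a - v b| ≤ K * w a b)
    {x y : X} (hne : ∃ l, IsWalk w x y l) :
    |v x - v y| ≤ K * gdist w x y := by
  obtain ⟨l₀, hl₀⟩ := hne
  rcases eq_or_lt_of_le hK with rfl | hK'
  · have := walk_bound hedge hl₀
    simpa using this
  · rw [mul_comm, ← div_le_iff₀ hK']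
    unfold gdist
    refine le_csInf ⟨pathLen w l₀, l₀, hl₀, rfl⟩ ?_
    rintro r ⟨l, hl, rfl⟩
    rw [div_le_iff₀ hK', mul_comm]
    exact walk_bound hedge hl

end Graph

section Tree
variable [DecidableEq X]

lemma treeW_parent {x : X} (hx : x ≠ T.root) : treeW T x (T.parent x) = T.wt x := by
  have h := parent_ne hx
  simp [treeW, h.symm]

lemma treeW_pos_symm : ∀ a b : X, 0 < treeW T a b → 0 < treeW T b a := by
  intro a b h
  have hab : a ≠ b := by
    rintro rfl; simp [treeW] at h
  have hkey : T.parent a = b ∨ T.parent b = a := by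
    by_contra hc
    push_neg at hc
    simp [treeW, hab, hc.1, hc.2] at h
  unfold treeW
  rcases eq_or_ne (T.parent b) a with hba | hba
  · rw [if_pos ⟨Ne.symm hab, hba⟩]
    refine T.wt_pos b fun hb => hab ?_
    have ha : a = T.root := by rw [← hba, hb, T.parent_root]
    rw [ha, hb]
  · have hpa : T.parent a = b := hkey.resolve_right hba
    rw [if_neg (fun hc => hba hc.2), if_pos ⟨Ne.symm hab, hpa⟩]
    refine T.wt_pos a fun ha => hab ?_
    have hb : b = T.root := by rw [← hpa, ha, T.parent_root]
    rw [ha, hb]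

lemma exists_walk_to_root (x : X) : ∃ l, IsWalk (treeW T) x T.root l := by
  obtain ⟨n, hn⟩ := T.reach x
  induction n generalizing x with
  | zero =>
      simp only [Function.iterate_zero_apply] at hn
      exact ⟨[x], rfl, by simp [hn], List.isChain_singleton x⟩
  | succ n ih =>
      by_cases hx : x = T.root
      · exact ⟨[x], rfl, by simp [hx], List.isChain_singleton x⟩
      · rw [Function.iterate_succ_apply] at hn
        obtain ⟨l, hh, hl, hc⟩ := ih (T.parent x) hn
        rcases l with _ | ⟨a, t⟩
        · simp at hh
        · simp only [List.head?_cons, Option.some.injEq] at hh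
          subst hh
          refine ⟨x :: T.parent x :: t, rfl, by simpa using hl, ?_⟩
          unfold List.Chain'
          rw [List.isChain_cons_cons]
          refine ⟨?_, hc⟩
          rw [treeW_parent hx]
          exact T.wt_pos x hx

lemma exists_walk (x y : X) : ∃ l, IsWalk (treeW T) x y l := by
  obtain ⟨l₁, h₁⟩ := exists_walk_to_root (T := T) x
  obtain ⟨l₂, h₂⟩ := exists_walk_to_root (T := T) y
  exact h₁.comp (h₂.reverse treeW_pos_symm)

end Tree
end Aux

section Aux2
open WRootedTree
variable {X : Type*} [Fintype X] [DecidableEq X] {T : WRootedTree X}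

/-- Key summation recursion. -/
lemma sum_indicator_step {x : X} (hx : x ≠ T.root) (f : X → ℝ) :
    ∑ z, Set.indicator {z | z ≠ T.root ∧ treeLE T z x} f z
      = (∑ z, Set.indicator {z | z ≠ T.root ∧ treeLE T z (T.parent x)} f z) + f x := by
  have key : ∀ z, Set.indicator {z | z ≠ T.root ∧ treeLE T z x} f z
      = Set.indicator {z | z ≠ T.root ∧ treeLE T z (T.parent x)} f z
        + (if z = x then f x else 0) := by
    intro z
    by_cases hz : z = x
    · subst hz
      rw [Set.indicator_of_mem (by exact ⟨hx, treeLE_refl z⟩),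
        Set.indicator_of_notMem (fun hmem => not_treeLE_parent hx hmem.2), if_pos rfl]
      ring
    · rw [if_neg hz, add_zero]
      by_cases hmem : z ≠ T.root ∧ treeLE T z (T.parent x)
      · rw [Set.indicator_of_mem (show z ∈ {z | z ≠ T.root ∧ treeLE T z x} from
            ⟨hmem.1, treeLE_step.mpr (Or.inr hmem.2)⟩) f,
          Set.indicator_of_mem (show z ∈ {z | z ≠ T.root ∧ treeLE T z (T.parent x)} from hmem) f]
      · rw [Set.indicator_of_notMem
            (show z ∉ {z | z ≠ T.root ∧ treeLE T z (T.parent x)} from hmem) f,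
          Set.indicator_of_notMem (show z ∉ {z | z ≠ T.root ∧ treeLE T z x} from
            fun hmem' => hmem ⟨hmem'.1, (treeLE_step.mp hmem'.2).resolve_left hz⟩) f]
  simp only [key]
  rw [Finset.sum_add_distrib, Finset.sum_ite_eq' Finset.univ x (fun _ => f x),
    if_pos (Finset.mem_univ x)]

/-- Height function -/
noncomputable def theight (T : WRootedTree X) (x : X) : ℝ :=
  ∑ z, Set.indicator {z | z ≠ T.root ∧ treeLE T z x} T.wt z

lemma theight_step {x : X} (hx : x ≠ T.root) :
    theight T x = theight T (T.parent x) + T.wt x := sum_indicator_step hx T.wt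

lemma theight_edge : ∀ a b : X, 0 < treeW T a b → |theight T a - theight T b| ≤ 1 * treeW T a b := by
  intro a b h
  unfold treeW at h ⊢
  split_ifs at h ⊢ with h1 h2
  · -- parent a = b
    have har : a ≠ T.root := fun ha => h1.1 (by rw [ha, ← h1.2, ha, T.parent_root])
    rw [theight_step har, h1.2, one_mul]
    have := T.wt_pos a har
    rw [abs_of_nonneg (by linarith [add_sub_cancel_left (theight T b) (T.wt a)])]
    · linarith
  · have hbr : b ≠ T.root := fun hb => h2.1 (by rw [hb, ← h2.2, hb, T.parent_root])
    rw [theight_step hbr, h2.2, one_mul]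
    have := T.wt_pos b hbr
    rw [abs_sub_comm, abs_of_nonneg (by linarith [add_sub_cancel_left (theight T a) (T.wt b)])]
    linarith
  · exact absurd h (lt_irrefl 0)

lemma tdist_parent {x : X} (hx : x ≠ T.root) : tdist T x (T.parent x) = T.wt x := by
  apply le_antisymm
  · have hwalk : IsWalk (treeW T) x (T.parent x) [x, T.parent x] := by
      refine ⟨rfl, rfl, ?_⟩
      unfold List.Chain'
      rw [List.isChain_cons_cons]
      exact ⟨by rw [treeW_parent hx]; exact T.wt_pos x hx, List.isChain_singleton _⟩
    have := gdist_le_pathLen hwalk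
    simpa [tdist, pathLen, treeW_parent hx] using this
  · have := abs_le_mul_gdist (v := theight T) zero_le_one theight_edge
      (exists_walk (T := T) x (T.parent x))
    rw [one_mul] at this
    have hstep : theight T x - theight T (T.parent x) = T.wt x := by
      rw [theight_step hx]; ring
    calc T.wt x = |theight T x - theight T (T.parent x)| := by
          rw [hstep]; exact (abs_of_pos (T.wt_pos x hx)).symm
      _ ≤ tdist T x (T.parent x) := this

lemma treePsi_step (φ : X → ℝ) {x : X} (hx : x ≠ T.root) :
    treePsi T φ x = treePsi T φ (T.parent x) + tdist T x (T.parent x) * φ x :=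
  sum_indicator_step hx _

lemma treePsi_root (φ : X → ℝ) : treePsi T φ T.root = 0 := by
  unfold treePsi
  apply Finset.sum_eq_zero
  intro z _
  apply Set.indicator_of_notMem
  rintro ⟨hz, hle⟩
  exact hz (treeLE_root_iff.mp hle)

end Aux2

section Aux3
open WRootedTree
variable {X : Type*} [Fintype X] [DecidableEq X] {T : WRootedTree X}

lemma treePsi_edge (φ : X → ℝ) {K : ℝ} (hle : ∀ x, |φ x| ≤ K) :
    ∀ a b : X, 0 < treeW T a b → |treePsi T φ a - treePsi T φ b| ≤ K * treeW T a b := by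
  intro a b h
  unfold treeW at h ⊢
  split_ifs at h ⊢ with h1 h2
  · have har : a ≠ T.root := fun ha => h1.1 (by rw [ha, ← h1.2, ha, T.parent_root])
    have hdiff : treePsi T φ a - treePsi T φ b = T.wt a * φ a := by
      rw [← h1.2, treePsi_step φ har, tdist_parent har]; ring
    rw [hdiff, abs_mul, abs_of_pos (T.wt_pos a har), mul_comm]
    exact mul_le_mul_of_nonneg_right (hle a) (le_of_lt (T.wt_pos a har))
  · have hbr : b ≠ T.root := fun hb => h2.1 (by rw [hb, ← h2.2, hb, T.parent_root])
    have hdiff : treePsi T φ b - treePsi T φ a = T.wt b * φ b := by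
      rw [← h2.2, treePsi_step φ hbr, tdist_parent hbr]; ring
    rw [abs_sub_comm, hdiff, abs_mul, abs_of_pos (T.wt_pos b hbr), mul_comm]
    exact mul_le_mul_of_nonneg_right (hle b) (le_of_lt (T.wt_pos b hbr))
  · exact absurd h (lt_irrefl 0)

lemma psi_delta_aux (u : X → ℝ) (hu : u T.root = 0) :
    ∀ (n : ℕ) (x : X), T.parent^[n] x = T.root → treePsi T (treeDelta T u) x = u x := by
  intro n
  induction n with
  | zero =>
      intro x hx
      simp only [Function.iterate_zero_apply] at hx
      rw [hx, treePsi_root, hu]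
  | succ n ih =>
      intro x hx
      by_cases hxr : x = T.root
      · rw [hxr, treePsi_root, hu]
      · rw [Function.iterate_succ_apply] at hx
        have hwne : tdist T x (T.parent x) ≠ 0 := by
          rw [tdist_parent hxr]; exact ne_of_gt (T.wt_pos x hxr)
        rw [treePsi_step _ hxr, ih _ hx, treeDelta, if_neg hxr,
          mul_div_cancel₀ _ hwne]
        ring

theorem treePsi_isometric_iso' (T : WRootedTree X) :
    (∀ φ ψ : X → ℝ, treePsi T (φ + ψ) = treePsi T φ + treePsi T ψ) ∧
    (∀ (c : ℝ) (φ : X → ℝ), treePsi T (c • φ) = c • treePsi T φ) ∧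
    (∀ φ : X → ℝ, treePsi T φ T.root = 0) ∧
    (∀ φ : X → ℝ, φ T.root = 0 →
      IsLeast {K | 0 ≤ K ∧ ∀ x y, |treePsi T φ x - treePsi T φ y| ≤ K * tdist T x y}
        (⨆ x, |φ x|)) ∧
    (∀ φ : X → ℝ, φ T.root = 0 → treeDelta T (treePsi T φ) = φ) ∧
    (∀ u : X → ℝ, u T.root = 0 → treePsi T (treeDelta T u) = u) := by
  have hne : Nonempty X := ⟨T.root⟩
  refine ⟨?_, ?_, fun φ => treePsi_root φ, ?_, ?_, ?_⟩
  · intro φ ψ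
    funext y
    simp only [Pi.add_apply, treePsi, ← Finset.sum_add_distrib]
    apply Finset.sum_congr rfl
    intro z _
    by_cases hz : z ∈ {x | x ≠ T.root ∧ treeLE T x y}
    · rw [Set.indicator_of_mem hz, Set.indicator_of_mem hz, Set.indicator_of_mem hz]
      ring
    · rw [Set.indicator_of_notMem hz, Set.indicator_of_notMem hz,
        Set.indicator_of_notMem hz]
      ring
  · intro c φ
    funext y
    simp only [Pi.smul_apply, treePsi, smul_eq_mul, Finset.mul_sum]
    apply Finset.sum_congr rfl
    intro z _
    by_cases hz : z ∈ {x | x ≠ T.root ∧ treeLE T x y}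
    · rw [Set.indicator_of_mem hz, Set.indicator_of_mem hz]
      ring
    · rw [Set.indicator_of_notMem hz, Set.indicator_of_notMem hz]
      ring
  · intro φ hφ
    have hbdd : BddAbove (Set.range fun x => |φ x|) := (Set.finite_range _).bddAbove
    have hle : ∀ x, |φ x| ≤ ⨆ x, |φ x| := fun x => le_ciSup hbdd x
    have hK0 : 0 ≤ ⨆ x, |φ x| := (abs_nonneg _).trans (hle T.root)
    constructor
    · exact ⟨hK0, fun x y => abs_le_mul_gdist hK0 (treePsi_edge φ hle) (exists_walk x y)⟩
    · rintro K' ⟨hK'0, hK'⟩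
      apply ciSup_le
      intro x
      by_cases hx : x = T.root
      · rw [hx, hφ, abs_zero]; exact hK'0
      · have h := hK' x (T.parent x)
        rw [treePsi_step φ hx, tdist_parent hx] at h
        have hw := T.wt_pos x hx
        have : T.wt x * |φ x| ≤ K' * T.wt x := by
          calc T.wt x * |φ x| = |treePsi T φ (T.parent x) + T.wt x * φ x - treePsi T φ (T.parent x)| := by
                rw [add_sub_cancel_left, abs_mul, abs_of_pos hw]
            _ ≤ K' * T.wt x := h
        rw [mul_comm (T.wt x)] at this
        exact le_of_mul_le_mul_right this hw
  · intro φ hφ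
    funext x
    by_cases hx : x = T.root
    · rw [hx, treeDelta, if_pos rfl, hφ]
    · rw [treeDelta, if_neg hx, treePsi_step φ hx, add_sub_cancel_left,
        mul_div_cancel_left₀]
      rw [tdist_parent hx]
      exact ne_of_gt (T.wt_pos x hx)
  · intro u hu
    funext x
    obtain ⟨n, hn⟩ := T.reach x
    exact psi_delta_aux u hu n x hn

end Aux3

/-- The map φ ↦ u_φ is a linear isometric isomorphism from ℓ∞ on the non-root vertices
(modelled as functions vanishing at the root) onto the pointed Lipschitz space:
it is linear, its image vanishes at the root, the smallest Lipschitz constant of u_φ is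
the sup norm of φ, and Δ is its two-sided inverse. -/
theorem treePsi_isometric_iso {X : Type*} [Fintype X] [DecidableEq X] (T : WRootedTree X) :
    (∀ φ ψ : X → ℝ, treePsi T (φ + ψ) = treePsi T φ + treePsi T ψ) ∧
    (∀ (c : ℝ) (φ : X → ℝ), treePsi T (c • φ) = c • treePsi T φ) ∧
    (∀ φ : X → ℝ, treePsi T φ T.root = 0) ∧
    (∀ φ : X → ℝ, φ T.root = 0 →
      IsLeast {K | 0 ≤ K ∧ ∀ x y, |treePsi T φ x - treePsi T φ y| ≤ K * tdist T x y}
        (⨆ x, |φ x|)) ∧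
    (∀ φ : X → ℝ, φ T.root = 0 → treeDelta T (treePsi T φ) = φ) ∧
    (∀ u : X → ℝ, u T.root = 0 → treePsi T (treeDelta T u) = u) :=
  treePsi_isometric_iso' T
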